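/- arXiv:1908.08905 — 2 statements merged into one kernel-verified Lean document; each statement's English description precedes it below -/
import Mathlib

section
/- In the bounded-treewidth dynamic program for maximum-ink SPED, for a forget node t with child t' where X_t = X_{t'} \ {v}, and any valid stub set S ⊆ S(X_t), the table entry satisfies W(t, S) = max{ W(t', S ∪ {(v, ℓ_i(v))}) : i = 0, ..., δ_v }. -/
open scoped Classical

/-- The stub pairs `(u, ℓ)` with `u ∈ A` and `ℓ` a candidate stub length of `u`. -/
noncomputable def stubPairs {V : Type*} (cand : V → Finset ℝ) (A : Finset V) :
    Finset (V × ℝ) :=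
  A.biUnion fun u => (cand u).image fun l => (u, l)

/-- A stub set over the vertex set `A` is valid if it contains exactly one candidate stub
pair per vertex of `A` and no two of its pairs intersect. -/
def ValidStubSet {V : Type*} (cand : V → Finset ℝ) (meets : V → ℝ → V → ℝ → Prop)
    (A : Finset V) (S : Finset (V × ℝ)) : Prop :=
  S ⊆ stubPairs cand A ∧ (∀ u ∈ A, ∃! l : ℝ, (u, l) ∈ S) ∧
  ∀ p ∈ S, ∀ q ∈ S, p.1 ≠ q.1 → ¬ meets p.1 p.2 q.1 q.2

/-- The ink of a stub set: the total stub length. -/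
noncomputable def inkOf {V : Type*} (S : Finset (V × ℝ)) : ℝ := ∑ p ∈ S, p.2

/-- The dynamic-programming table: `Wtab cand meets X Vt S` is the maximum ink of a valid
stub set `T` on `Vt` with `S ⊆ T` and `T ∩ S(X) = S` (and `⊥ = -∞` if none exists). -/
noncomputable def Wtab {V : Type*} (cand : V → Finset ℝ)
    (meets : V → ℝ → V → ℝ → Prop) (X Vt : Finset V) (S : Finset (V × ℝ)) : EReal :=
  sSup {x : EReal | ∃ T : Finset (V × ℝ), ValidStubSet cand meets Vt T ∧
    S ⊆ T ∧ T ∩ stubPairs cand X = S ∧ x = (inkOf T : EReal)}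

/-! A valid stub set on `V_t` contains exactly one stub `(v, ℓ)` of the forgotten vertex `v`, so
its trace on `S(X_{t'})` is its trace on `S(X_t)` plus `(v, ℓ)`; hence the admissible stub sets
for `W(t, S)` are exactly the union over `ℓ` of those for `W(t', S ∪ {(v, ℓ)})`. -/

section StubPairs

variable {V : Type*} (cand : V → Finset ℝ)

@[simp]
lemma mem_stubPairs {A : Finset V} {u : V} {l : ℝ} :
    (u, l) ∈ stubPairs cand A ↔ u ∈ A ∧ l ∈ cand u := by
  simp [stubPairs]

lemma stubPairs_erase (A : Finset V) (v : V) :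
    stubPairs cand (A.erase v) = (stubPairs cand A).filter fun p => p.1 ≠ v := by
  ext ⟨u, l⟩
  simp only [mem_stubPairs, Finset.mem_erase, Finset.mem_filter]
  tauto

variable {cand} {X : Finset V} {v : V} {l : ℝ} {S T : Finset (V × ℝ)}

lemma inter_stubPairs_erase_eq (hS : S ⊆ stubPairs cand (X.erase v))
    (hT : T ∩ stubPairs cand X = insert (v, l) S) :
    T ∩ stubPairs cand (X.erase v) = S := by
  have hSv : ∀ p ∈ S, p.1 ≠ v := fun _ hp =>
    Finset.ne_of_mem_erase ((mem_stubPairs cand).1 (hS hp)).1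
  rw [stubPairs_erase, Finset.inter_filter, hT, Finset.filter_insert,
    if_neg (not_not_intro rfl), Finset.filter_true_of_mem hSv]

lemma exists_inter_stubPairs_eq_insert {meets : V → ℝ → V → ℝ → Prop} {Vt : Finset V}
    (hT : ValidStubSet cand meets Vt T) (hvX : v ∈ X) (hXV : X ⊆ Vt)
    (hTS : T ∩ stubPairs cand (X.erase v) = S) :
    ∃ l ∈ cand v, T ∩ stubPairs cand X = insert (v, l) S := by
  obtain ⟨hTsub, hunique, -⟩ := hT
  obtain ⟨l, hl, hl_unique⟩ := hunique v (hXV hvX)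
  have hlc : l ∈ cand v := (mem_stubPairs cand |>.1 (hTsub hl)).2
  refine ⟨l, hlc, ?_⟩
  ext ⟨u, m⟩
  rw [← hTS]
  simp only [Finset.mem_inter, Finset.mem_insert, mem_stubPairs, Finset.mem_erase,
    Prod.mk.injEq]
  by_cases huv : u = v
  · subst huv
    exact ⟨fun h => .inl ⟨rfl, hl_unique m h.1⟩, by rintro (⟨-, rfl⟩ | h) <;> tauto⟩
  · tauto

end StubPairs

section Wtab

variable {V : Type*} {cand : V → Finset ℝ} {meets : V → ℝ → V → ℝ → Prop}
  {X Vt : Finset V} {S T : Finset (V × ℝ)}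

lemma inkOf_le_Wtab (hT : ValidStubSet cand meets Vt T) (hTS : T ∩ stubPairs cand X = S) :
    (inkOf T : EReal) ≤ Wtab cand meets X Vt S :=
  le_sSup ⟨T, hT, hTS ▸ Finset.inter_subset_left, hTS, rfl⟩

lemma Wtab_le {y : EReal}
    (h : ∀ T, ValidStubSet cand meets Vt T → T ∩ stubPairs cand X = S → (inkOf T : EReal) ≤ y) :
    Wtab cand meets X Vt S ≤ y :=
  sSup_le fun _ ⟨T, hT, _, hTS, hx⟩ => hx ▸ h T hT hTS

end Wtab

theorem stmt_9_general {V : Type*} (cand : V → Finset ℝ)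
    (meets : V → ℝ → V → ℝ → Prop)
    (Xt' Vt' : Finset V) (hXV : Xt' ⊆ Vt')
    (v : V) (hv : v ∈ Xt')
    (Xt Vt : Finset V) (hXt : Xt = Xt'.erase v) (hVt : Vt = Vt')
    (S : Finset (V × ℝ)) (hS : ValidStubSet cand meets Xt S) :
    Wtab cand meets Xt Vt S =
      sSup {x : EReal | ∃ l ∈ cand v, x = Wtab cand meets Xt' Vt' (insert (v, l) S)} := by
  subst hXt hVt
  apply le_antisymm
  · refine Wtab_le fun T hT hTS => ?_
    obtain ⟨l, hl, hT'⟩ := exists_inter_stubPairs_eq_insert hT hv hXV hTS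
    exact (inkOf_le_Wtab hT hT').trans (le_sSup ⟨l, hl, rfl⟩)
  · refine sSup_le ?_
    rintro _ ⟨l, -, rfl⟩
    exact Wtab_le fun T hT hTS => inkOf_le_Wtab hT (inter_stubPairs_erase_eq hS.1 hTS)

/-- the forget-node recurrence of the bounded-treewidth DP for MaxSPED.
At a forget node `t` with child `t'`, `X_t = X_{t'} \ {v}` and `V_t = V_{t'}`.  For any
valid stub set `S ⊆ S(X_t)`,
`W(t, S) = max { W(t', S ∪ {(v, ℓ)}) : ℓ a candidate stub length of v }`. -/
theorem stmt_9 {V : Type*} (cand : V → Finset ℝ)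
    (meets : V → ℝ → V → ℝ → Prop)
    (meets_symm : ∀ u a w b, meets u a w b → meets w b u a)
    (Xt' Vt' : Finset V) (hXV : Xt' ⊆ Vt')
    (v : V) (hv : v ∈ Xt')
    (Xt Vt : Finset V) (hXt : Xt = Xt'.erase v) (hVt : Vt = Vt')
    (S : Finset (V × ℝ)) (hS : ValidStubSet cand meets Xt S) :
    Wtab cand meets Xt Vt S =
      sSup {x : EReal | ∃ l ∈ cand v, x = Wtab cand meets Xt' Vt' (insert (v, l) S)} :=
  stmt_9_general cand meets Xt' Vt' hXV v hv Xt Vt hXt hVt S hS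
end

section
/- For an asymmetric partial edge drawing of a segment s(u) whose vertex u in the intersection graph has degree δ_u, any maximum-ink PED can be assumed to choose the two stub lengths of s(u) from a set of at most (δ_u + 1)^2 combinations, namely pairs (ℓ_i^L(u), ℓ_j^R(u)) of candidate left and right stub lengths each induced by crossing points or the full half. -/
open scoped Classical

/-!
Round every stub length up to the nearest candidate length of its side. This only adds ink,
and it keeps the drawing valid: a stub covers a crossing point iff it is longer than the
distance to it, that distance is itself a candidate length, and rounding up to the next
candidate never passes a candidate.
-/

namespace Finset

theorem card_insert_image_le {α β : Type*} [DecidableEq β] (s : Finset α) (f : α → β) (b : β) :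
    (insert b (s.image f)).card ≤ s.card + 1 :=
  (card_insert_le _ _).trans (Nat.add_le_add_right card_image_le 1)

section ceilIn

variable {α : Type*} [LinearOrder α]

/-- Falls back to `x` when no element of `s` is `≥ x`. -/
noncomputable def ceilIn (s : Finset α) (x : α) : α :=
  if h : (s.filter (x ≤ ·)).Nonempty then (s.filter (x ≤ ·)).min' h else x

theorem le_ceilIn (s : Finset α) (x : α) : x ≤ s.ceilIn x := by
  unfold ceilIn
  split_ifs with h
  · exact (mem_filter.mp ((s.filter (x ≤ ·)).min'_mem h)).2
  · exact le_rfl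

theorem ceilIn_le {s : Finset α} {x y : α} (hy : y ∈ s) (hxy : x ≤ y) : s.ceilIn x ≤ y := by
  have h : (s.filter (x ≤ ·)).Nonempty := ⟨y, mem_filter.mpr ⟨hy, hxy⟩⟩
  rw [ceilIn, dif_pos h]
  exact min'_le _ _ (mem_filter.mpr ⟨hy, hxy⟩)

theorem ceilIn_mem {s : Finset α} {x y : α} (hy : y ∈ s) (hxy : x ≤ y) : s.ceilIn x ∈ s := by
  have h : (s.filter (x ≤ ·)).Nonempty := ⟨y, mem_filter.mpr ⟨hy, hxy⟩⟩
  rw [ceilIn, dif_pos h]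
  exact (mem_filter.mp ((s.filter (x ≤ ·)).min'_mem h)).1

theorem lt_of_lt_ceilIn {s : Finset α} {x p : α} (hp : p ∈ s) (hlt : p < s.ceilIn x) :
    p < x :=
  lt_of_not_ge fun hxp => (ceilIn_le hp hxp).not_gt hlt

end ceilIn

end Finset

open Finset

theorem covers_of_covers_ceilIn {L R : Finset ℝ} {ℓ p a b : ℝ} (hpL : p ∈ L) (hpR : ℓ - p ∈ R)
    (h : p < L.ceilIn a ∨ ℓ - p < R.ceilIn b) : p < a ∨ ℓ - p < b :=
  h.imp (lt_of_lt_ceilIn hpL) (lt_of_lt_ceilIn hpR)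

theorem stmt_13_general {V : Type*} [Fintype V]
    (len : V → ℝ) (cross : V → V → Prop) [DecidableRel cross]
    (pos : V → V → ℝ)
    (cross_symm : ∀ u v, cross u v → cross v u)
    (δ : V → ℕ) (hδ : ∀ u, δ u = (Finset.univ.filter fun v => cross u v).card)
    (LeftCand RightCand : V → Finset ℝ)
    (hL : ∀ u, LeftCand u =
      insert (len u) ((Finset.univ.filter fun v => cross u v).image (pos u)))
    (hR : ∀ u, RightCand u =
      insert (len u) ((Finset.univ.filter fun v => cross u v).image fun v => len u - pos u v))
    (valid : (V → ℝ) → (V → ℝ) → Prop)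
    (hvalid : ∀ a b, valid a b ↔
      ((∀ u, 0 < a u ∧ a u ≤ len u ∧ 0 < b u ∧ b u ≤ len u) ∧
        ∀ u v, cross u v →
          ¬ ((pos u v < a u ∨ len u - pos u v < b u) ∧
             (pos v u < a v ∨ len v - pos v u < b v))))
    (ink : (V → ℝ) → (V → ℝ) → ℝ)
    (hink : ∀ a b, ink a b = ∑ u, min (a u + b u) (len u)) :
    (∀ u, ((LeftCand u) ×ˢ (RightCand u)).card ≤ (δ u + 1) ^ 2) ∧
    (∀ a b, valid a b → ∃ a' b', valid a' b' ∧ ink a b ≤ ink a' b' ∧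
      ∀ u, (a' u, b' u) ∈ (LeftCand u) ×ˢ (RightCand u)) := by
  have hlenL : ∀ u, len u ∈ LeftCand u := fun u => hL u ▸ mem_insert_self _ _
  have hlenR : ∀ u, len u ∈ RightCand u := fun u => hR u ▸ mem_insert_self _ _
  have hposL : ∀ u v, cross u v → pos u v ∈ LeftCand u := fun u v huv =>
    hL u ▸ mem_insert_of_mem (mem_image_of_mem _ (by simpa using huv))
  have hposR : ∀ u v, cross u v → len u - pos u v ∈ RightCand u := fun u v huv =>
    hR u ▸ mem_insert_of_mem (mem_image_of_mem (fun v => len u - pos u v) (by simpa using huv))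
  refine ⟨fun u => ?_, fun a b hab => ?_⟩
  · rw [card_product, sq, hδ u]
    exact Nat.mul_le_mul (hL u ▸ card_insert_image_le _ _ _) (hR u ▸ card_insert_image_le _ _ _)
  obtain ⟨hbnd, hdisj⟩ := (hvalid a b).mp hab
  refine ⟨fun u => (LeftCand u).ceilIn (a u), fun u => (RightCand u).ceilIn (b u), ?_, ?_, ?_⟩
  · refine (hvalid _ _).mpr ⟨fun u => ?_, fun u v huv hcov => hdisj u v huv ?_⟩
    · obtain ⟨ha0, hal, hb0, hbl⟩ := hbnd u
      exact ⟨ha0.trans_le (le_ceilIn _ _), ceilIn_le (hlenL u) hal,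
        hb0.trans_le (le_ceilIn _ _), ceilIn_le (hlenR u) hbl⟩
    · have hvu := cross_symm u v huv
      exact ⟨covers_of_covers_ceilIn (hposL u v huv) (hposR u v huv) hcov.1,
        covers_of_covers_ceilIn (hposL v u hvu) (hposR v u hvu) hcov.2⟩
  · rw [hink, hink]
    exact sum_le_sum fun u _ => min_le_min_right _ (add_le_add (le_ceilIn _ _) (le_ceilIn _ _))
  · exact fun u => mem_product.mpr
      ⟨ceilIn_mem (hlenL u) (hbnd u).2.1, ceilIn_mem (hlenR u) (hbnd u).2.2.2⟩

/-- For an asymmetric partial edge drawing (PED), any maximum-ink PED can be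
assumed to choose, for each segment `s(u)` of degree `δ u` in the intersection graph, its
two stub lengths from a set of at most `(δ u + 1)²` combinations: pairs of candidate left
and right stub lengths, each induced by a crossing point or drawing up to the far endpoint.

Model: `len u` is the length of segment `u`, `cross` the crossing relation, and `pos u v`
the distance from the left endpoint of `u` to the crossing point with `v`.  A PED assigns
a left stub length `a u` and a right stub length `b u` (each in `(0, len u]`; together
they may cover the whole segment, in which case the segment is fully drawn and its drawn
length is `len u`, so the ink of `u` is `min (a u + b u) (len u)`).  The drawn part of `u`
covers a crossing at position `p` iff `p < a u` or `len u − p < b u`; validity requires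
that for no crossing pair both segments cover the crossing point.  The candidate left stub
lengths of `u` are the crossing positions together with `len u`, and symmetrically for the
right side; each candidate set has at most `δ u + 1` elements. -/
theorem stmt_13 {V : Type*} [Fintype V] [DecidableEq V]
    (len : V → ℝ) (cross : V → V → Prop) [DecidableRel cross]
    (pos : V → V → ℝ)
    (cross_symm : ∀ u v, cross u v → cross v u)
    (cross_irrefl : ∀ u, ¬ cross u u)
    (hlen : ∀ u, 0 < len u)
    (hpos : ∀ u v, cross u v → 0 < pos u v ∧ pos u v < len u)
    (δ : V → ℕ) (hδ : ∀ u, δ u = (Finset.univ.filter fun v => cross u v).card)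
    (LeftCand RightCand : V → Finset ℝ)
    (hL : ∀ u, LeftCand u =
      insert (len u) ((Finset.univ.filter fun v => cross u v).image (pos u)))
    (hR : ∀ u, RightCand u =
      insert (len u) ((Finset.univ.filter fun v => cross u v).image fun v => len u - pos u v))
    (valid : (V → ℝ) → (V → ℝ) → Prop)
    (hvalid : ∀ a b, valid a b ↔
      ((∀ u, 0 < a u ∧ a u ≤ len u ∧ 0 < b u ∧ b u ≤ len u) ∧
        ∀ u v, cross u v →
          ¬ ((pos u v < a u ∨ len u - pos u v < b u) ∧
             (pos v u < a v ∨ len v - pos v u < b v))))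
    (ink : (V → ℝ) → (V → ℝ) → ℝ)
    (hink : ∀ a b, ink a b = ∑ u, min (a u + b u) (len u)) :
    (∀ u, ((LeftCand u) ×ˢ (RightCand u)).card ≤ (δ u + 1) ^ 2) ∧
    (∀ a b, valid a b → ∃ a' b', valid a' b' ∧ ink a b ≤ ink a' b' ∧
      ∀ u, (a' u, b' u) ∈ (LeftCand u) ×ˢ (RightCand u)) :=
  stmt_13_general len cross pos cross_symm δ hδ LeftCand RightCand hL hR valid hvalid ink hink
end
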